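/- arXiv:1609.09206 — 4 statements merged into one kernel-verified Lean document; each statement's English description precedes it below -/
import Mathlib

section
/- Let A be the 2m×2m block upper bidiagonal matrix with m diagonal blocks Q = [[cos θ, sin θ], [−sin θ, cos θ]] and identity blocks I₂ on the superdiagonal. Then for every n ≥ 0 and every j with 1 ≤ j ≤ m, the first-row entries of Aⁿ satisfy Aⁿ(1, 2j−1) = C(n, j−1)·cos((n − j + 1)θ) and Aⁿ(1, 2j) = C(n, j−1)·sin((n − j + 1)θ), where C(n,k) denotes the binomial coefficient (taken to be 0 when k > n). -/
/-- The `2m × 2m` real Jordan form with `m` identical rotation blocks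
`Q = [[cos θ, sin θ], [−sin θ, cos θ]]` on the diagonal and `I₂` blocks on
the superdiagonal (0-indexed). -/
noncomputable def jordanOsc (m : ℕ) (θ : ℝ) : Matrix (Fin (2 * m)) (Fin (2 * m)) ℝ :=
  Matrix.of fun i j =>
    if (i : ℕ) / 2 = (j : ℕ) / 2 then
      (if (i : ℕ) % 2 = (j : ℕ) % 2 then Real.cos θ
       else if (i : ℕ) % 2 = 0 then Real.sin θ else -Real.sin θ)
    else if (j : ℕ) / 2 = (i : ℕ) / 2 + 1 ∧ (i : ℕ) % 2 = (j : ℕ) % 2 then 1 else 0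


/-!
Read the first row of `Aⁿ` as pairs `(r₂ₖ, r₂ₖ₊₁)`. Right multiplication by `A` rotates each
pair by `θ` and adds the previous pair, so the `k`-th pair of `Aⁿ⁺¹` is the rotation of the
`k`-th pair of `Aⁿ` plus the `(k-1)`-th. With the pairs `C(n, k) · (cos, sin)((n - k)θ)` all
summands share the angle `(n + 1 - k)θ`, and Pascal's rule closes the induction.
-/

open Real Matrix

section
variable {m k : ℕ} {θ : ℝ}

theorem jordanOsc_apply_even_col (hk : k < m) (x : Fin (2 * m)) :
    jordanOsc m θ x ⟨2 * k, by omega⟩ =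
      (if x = ⟨2 * k, by omega⟩ then cos θ else 0) +
      (if x = ⟨2 * k + 1, by omega⟩ then -sin θ else 0) +
      (if h : 0 < k then (if x = ⟨2 * (k - 1), by omega⟩ then 1 else 0) else 0) := by
  obtain ⟨x, hx⟩ := x
  simp only [jordanOsc, Matrix.of_apply, Fin.mk.injEq]
  split_ifs <;> first | omega | norm_num

theorem jordanOsc_apply_odd_col (hk : k < m) (x : Fin (2 * m)) :
    jordanOsc m θ x ⟨2 * k + 1, by omega⟩ =
      (if x = ⟨2 * k, by omega⟩ then sin θ else 0) +
      (if x = ⟨2 * k + 1, by omega⟩ then cos θ else 0) +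
      (if h : 0 < k then (if x = ⟨2 * (k - 1) + 1, by omega⟩ then 1 else 0) else 0) := by
  obtain ⟨x, hx⟩ := x
  simp only [jordanOsc, Matrix.of_apply, Fin.mk.injEq]
  split_ifs <;> first | omega | norm_num

variable {ι : Type*} (B : Matrix ι (Fin (2 * m)) ℝ) (i : ι)

theorem mul_jordanOsc_apply_even_col (hk : k < m) :
    (B * jordanOsc m θ) i ⟨2 * k, by omega⟩ =
      B i ⟨2 * k, by omega⟩ * cos θ - B i ⟨2 * k + 1, by omega⟩ * sin θ +
      (if h : 0 < k then B i ⟨2 * (k - 1), by omega⟩ else 0) := by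
  split_ifs with hk0 <;>
    simp [mul_apply, jordanOsc_apply_even_col hk, hk0, mul_add, Finset.sum_add_distrib,
      sub_eq_add_neg]

theorem mul_jordanOsc_apply_odd_col (hk : k < m) :
    (B * jordanOsc m θ) i ⟨2 * k + 1, by omega⟩ =
      B i ⟨2 * k, by omega⟩ * sin θ + B i ⟨2 * k + 1, by omega⟩ * cos θ +
      (if h : 0 < k then B i ⟨2 * (k - 1) + 1, by omega⟩ else 0) := by
  split_ifs with hk0 <;>
    simp [mul_apply, jordanOsc_apply_odd_col hk, hk0, mul_add, Finset.sum_add_distrib]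

theorem jordanOsc_pow_first_row_pair (n : ℕ) (hk : k < m) :
    (jordanOsc m θ ^ n) ⟨0, by omega⟩ ⟨2 * k, by omega⟩ = n.choose k * cos ((n - k) * θ) ∧
    (jordanOsc m θ ^ n) ⟨0, by omega⟩ ⟨2 * k + 1, by omega⟩ = n.choose k * sin ((n - k) * θ) := by
  induction n generalizing k with
  | zero =>
    rcases k.eq_zero_or_pos with rfl | hk0
    · simp [one_apply]
    · simp [Nat.choose_eq_zero_of_lt hk0, one_apply, Fin.ext_iff, hk0.ne']
  | succ n ih =>
    obtain ⟨hc, hs⟩ := ih hk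
    have hangle : ((n + 1 : ℕ) - k : ℝ) * θ = (n - k) * θ + θ := by push_cast; ring
    rw [pow_succ, mul_jordanOsc_apply_even_col _ _ hk, mul_jordanOsc_apply_odd_col _ _ hk, hc, hs,
      hangle, cos_add, sin_add]
    cases k with
    | zero => simp only [lt_irrefl, dite_false, Nat.choose_zero_right]; constructor <;> ring
    | succ k =>
      obtain ⟨hc', hs'⟩ := ih (k := k) (by omega)
      have hangle' : ((n : ℝ) - k) * θ = (n - (k + 1 : ℕ)) * θ + θ := by push_cast; ring
      simp only [Nat.succ_pos, dite_true, Nat.add_sub_cancel]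
      rw [hc', hs', hangle', cos_add, sin_add, Nat.choose_succ_succ']
      constructor <;> push_cast <;> ring

end

theorem jordanOsc_pow_first_row (m : ℕ) (θ : ℝ) (n : ℕ)
    (j : ℕ) (hj1 : 1 ≤ j) (hj2 : j ≤ m) :
    (jordanOsc m θ ^ n) ⟨0, by omega⟩ ⟨2 * j - 2, by omega⟩ =
      (n.choose (j - 1) : ℝ) * Real.cos (((n : ℝ) - j + 1) * θ) ∧
    (jordanOsc m θ ^ n) ⟨0, by omega⟩ ⟨2 * j - 1, by omega⟩ =
      (n.choose (j - 1) : ℝ) * Real.sin (((n : ℝ) - j + 1) * θ) := by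
  obtain ⟨k, rfl⟩ : ∃ k, j = k + 1 := ⟨j - 1, by omega⟩
  have hangle : ((n : ℝ) - (k + 1) + 1) * θ = (n - k) * θ := by ring
  simpa [hangle, Nat.mul_succ] using jordanOsc_pow_first_row_pair (θ := θ) n (by omega : k < m)
end

section
/- For all natural numbers m, w, h with w ≤ m and h ≤ m − 1, one has ∑_{k=0}^{w} (−1)^{m+k−1} · C(m, k) · C(m−k, w−k) · C(w+k, h − (m − w)) = 0, where C(a,b) = 0 whenever b < 0 or b > a. -/
/- Since `C(m, k) C(m - k, w - k) = C(m, w) C(w, k)`, the sum is `± C(m, w)` times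
`∑ₖ (-1)^(w - k) C(w, k) C(w + k, j)` with `j = h - (m - w) < w`. That is the `w`-th forward
difference of `x ↦ C(x, j)` at `x = w`, which vanishes: each difference lowers `j` by one
(Pascal's rule) and `C(x, 0)` is constant. -/

open Finset fwdDiff

theorem fwdDiff_iter_choose_eq_zero_of_lt {j n : ℕ} (h : j < n) (x : ℕ) :
    Δ_[1] ^[n] (fun x ↦ x.choose j : ℕ → ℤ) x = 0 := by
  obtain ⟨t, rfl⟩ := Nat.exists_eq_add_of_lt h
  have iter_choose_self : Δ_[1] ^[j] (fun x ↦ x.choose j : ℕ → ℤ) = fun _ ↦ 1 := by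
    simpa using fwdDiff_iter_choose 0 j
  rw [show j + t + 1 = t + 1 + j by ring, Function.iterate_add_apply, iter_choose_self,
    Function.iterate_succ_apply, fwdDiff_const]
  simp [fwdDiff_iter_eq_sum_shift]

theorem alternating_sum_choose_mul_choose_add_eq_zero {j w : ℕ} (h : j < w) :
    ∑ k ∈ range (w + 1), (-1 : ℤ) ^ (w - k) * w.choose k * (w + k).choose j = 0 := by
  have := fwdDiff_iter_eq_sum_shift 1 (fun x ↦ (x.choose j : ℤ)) w w
  rw [fwdDiff_iter_choose_eq_zero_of_lt h] at this
  simpa [smul_eq_mul] using this.symm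

theorem vanishing_binomial_sum_general (m w h : ℕ) (hh : h + 1 ≤ m) :
    (∑ k ∈ Finset.range (w + 1),
        (-1 : ℤ) ^ (m + k - 1) * m.choose k * (m - k).choose (w - k) *
          (if m - w ≤ h then ((w + k).choose (h - (m - w)) : ℤ) else 0)) = 0 := by
  split_ifs with hc
  · set j := h - (m - w)
    have term (k : ℕ) (hk : k ∈ range (w + 1)) :
        (-1 : ℤ) ^ (m + k - 1) * m.choose k * (m - k).choose (w - k) * (w + k).choose j =
          (-1) ^ (m - 1 + w) * m.choose w * ((-1) ^ (w - k) * w.choose k * (w + k).choose j) := by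
      have hkw : k ≤ w := Nat.lt_succ_iff.mp (mem_range.mp hk)
      have sign : (-1 : ℤ) ^ (m - 1 + w) * (-1) ^ (w - k) = (-1) ^ (m + k - 1) := by
        rw [← pow_add, show m - 1 + w + (w - k) = m + k - 1 + 2 * (w - k) by omega, pow_add,
          pow_mul, neg_one_sq, one_pow, mul_one]
      have choose : (m.choose k * (m - k).choose (w - k) : ℤ) = m.choose w * w.choose k := by
        exact_mod_cast (Nat.choose_mul hkw).symm
      linear_combination
        (w + k).choose j * ((-1) ^ (m + k - 1) * choose - m.choose w * w.choose k * sign)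
    rw [sum_congr rfl term, ← mul_sum, alternating_sum_choose_mul_choose_add_eq_zero (by omega),
      mul_zero]
  · simp

theorem vanishing_binomial_sum (m w h : ℕ) (hw : w ≤ m) (hh : h + 1 ≤ m) :
    (∑ k ∈ Finset.range (w + 1),
        (-1 : ℤ) ^ (m + k - 1) * m.choose k * (m - k).choose (w - k) *
          (if m - w ≤ h then ((w + k).choose (h - (m - w)) : ℤ) else 0)) = 0 :=
  vanishing_binomial_sum_general m w h hh
end

section
/- Fix integers m ≥ 1 and define, for 0 ≤ k ≤ 2m−1, l_k(θ) = (−1)^{k−1} · ∑_{h=0}^{⌊k/2⌋} C(m, k−2h) · C(m−(k−2h), h) · (2 cos θ)^{k−2h}, and set l_{2m}(θ) = −1. Then for every h with 0 ≤ h ≤ m−1 and every real θ, ∑_{k=0}^{2m} l_k(θ) · C(k, h) · e^{i(k−h)θ} = 0. -/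
open Complex

/-- The coefficients `l_k(θ)`, for `0 ≤ k ≤ 2m − 1`:
`l_k(θ) = (−1)^{k−1} ∑_{h=0}^{⌊k/2⌋} C(m, k−2h) C(m−(k−2h), h) (2cos θ)^{k−2h}`.
(Note `(−1)^{k−1} = (−1)^{k+1}`.) -/
noncomputable def lCoeff (m : ℕ) (θ : ℝ) (k : ℕ) : ℝ :=
  (-1 : ℝ) ^ (k + 1) *
    ∑ h ∈ Finset.range (k / 2 + 1),
      (m.choose (k - 2 * h) * (m - (k - 2 * h)).choose h : ℝ) *
        (2 * Real.cos θ) ^ (k - 2 * h)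

/-!
With `a = e^{iθ}`, the polynomial `P = (X² − 2 cos θ X + 1)^m = ((X − a)(X − ā))^m` has coefficients
`−l_k(θ)` for `k < 2m` and leading coefficient `1`, so the sum is `−e^{−ihθ} ∑_k P_k C(k,h) a^k`.
That sum equals `a^h` times the `h`-th Hasse derivative of `P` at `a`, which vanishes because `a`
is a root of `P` of multiplicity `m > h`.
-/

open Polynomial

theorem Nat.choose_mul_choose_sub_comm (m i j : ℕ) :
    m.choose i * (m - i).choose j = m.choose j * (m - j).choose i := by
  have hi := Nat.choose_mul (n := m) (Nat.le_add_right i j)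
  have hj := Nat.choose_mul (n := m) (Nat.le_add_left j i)
  rw [Nat.add_sub_cancel_left] at hi
  rw [Nat.add_sub_cancel] at hj
  rw [← hi, ← hj, Nat.choose_symm_add]

namespace Polynomial

theorem coeff_C_mul_X_add_one_pow {R : Type*} [CommSemiring R] (c : R) (n k : ℕ) :
    ((C c * X + 1) ^ n).coeff k = c ^ k * n.choose k := by
  rw [add_pow, finsetSum_coeff]
  have hterm : ∀ j, ((C c * X) ^ j * 1 ^ (n - j) * (n.choose j : R[X])).coeff k =
      if k = j then c ^ j * n.choose j else 0 := by
    intro j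
    rw [one_pow, mul_one, mul_pow, ← C_pow, ← C_eq_natCast, mul_comm, ← mul_assoc, ← C_mul,
      coeff_C_mul_X_pow, mul_comm]
  simp only [hterm, Finset.sum_ite_eq, Finset.mem_range]
  split_ifs with hk
  · rfl
  · rw [Nat.choose_eq_zero_of_lt (by omega)]; simp

theorem coeff_X_sq_add_C_mul_X_add_one_pow {R : Type*} [CommSemiring R] (c : R) (m k : ℕ) :
    ((X ^ 2 + C c * X + 1) ^ m).coeff k =
      ∑ i ∈ Finset.range (k / 2 + 1),
        (m.choose (k - 2 * i) * (m - (k - 2 * i)).choose i : R) * c ^ (k - 2 * i) := by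
  rw [add_assoc, add_pow, finsetSum_coeff]
  simp only [← C_eq_natCast, coeff_mul_C, ← pow_mul, coeff_X_pow_mul', coeff_C_mul_X_add_one_pow,
    ite_mul, zero_mul]
  rw [← Finset.sum_filter]
  refine (Finset.sum_congr rfl fun i _ => ?_).trans (Finset.sum_subset ?_ fun i hi hi' => ?_)
  · rw [mul_comm, ← mul_assoc, ← Nat.cast_mul, Nat.choose_mul_choose_sub_comm]
    push_cast
    ring
  · intro i
    simp only [Finset.mem_filter, Finset.mem_range]
    omega
  · simp only [Finset.mem_filter, Finset.mem_range, not_and, not_le] at hi hi'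
    rw [Nat.choose_eq_zero_of_lt (n := m - _) (by omega)]
    simp

theorem sum_coeff_mul_choose_mul_pow {R : Type*} [CommSemiring R] (p : R[X]) (a : R) (h : ℕ)
    {n : ℕ} (hn : p.natDegree < n) :
    ∑ k ∈ Finset.range n, p.coeff k * k.choose h * a ^ k = a ^ h * (hasseDeriv h p).eval a := by
  rw [← p.sum_over_range' (f := fun k c => c * k.choose h * a ^ k) (fun _ => by simp) n hn,
    hasseDeriv_apply, eval_sum, Polynomial.sum_def, Polynomial.sum_def, Finset.mul_sum]
  refine Finset.sum_congr rfl fun k _ => ?_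
  rw [eval_monomial]
  rcases le_or_gt h k with hk | hk
  · rw [← pow_mul_pow_sub a hk]; ring
  · simp [Nat.choose_eq_zero_of_lt hk]

theorem eval_hasseDeriv_eq_zero_of_dvd {R : Type*} [CommRing R] {p : R[X]} {a : R} {m h : ℕ}
    (hp : (X - C a) ^ m ∣ p) (hh : h < m) : (hasseDeriv h p).eval a = 0 := by
  obtain ⟨q, rfl⟩ := hp
  rw [← taylor_coeff, taylor_mul, taylor_pow, map_sub, taylor_X, taylor_C, add_sub_cancel_right,
    coeff_X_pow_mul', if_neg (by omega)]

end Polynomial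

theorem X_sq_sub_two_cos_mul_X_add_one (z : ℂ) :
    (X ^ 2 - C (2 * cos z) * X + 1 : ℂ[X]) = (X - C (cexp (z * I))) * (X - C (cexp (-z * I))) := by
  have hsum : cexp (z * I) + cexp (-z * I) = 2 * cos z := by rw [cos]; ring
  have hprod : cexp (z * I) * cexp (-z * I) = 1 := by rw [← exp_add]; simp
  calc (X ^ 2 - C (2 * cos z) * X + 1 : ℂ[X])
      = X ^ 2 - C (cexp (z * I) + cexp (-z * I)) * X + C (cexp (z * I) * cexp (-z * I)) := by
        rw [hsum, hprod, C_1]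
    _ = _ := by rw [C_add, C_mul]; ring

theorem lCoeff_eq_neg_coeff (m : ℕ) (θ : ℝ) (k : ℕ) :
    (lCoeff m θ k : ℂ) = -((X ^ 2 - C (2 * cos (θ : ℂ)) * X + 1) ^ m).coeff k := by
  rw [sub_eq_add_neg, ← neg_mul, ← C_neg, coeff_X_sq_add_C_mul_X_add_one_pow, lCoeff,
    ← Finset.sum_neg_distrib]
  push_cast
  rw [Finset.mul_sum]
  refine Finset.sum_congr rfl fun i hi => ?_
  obtain ⟨j, rfl⟩ := Nat.exists_eq_add_of_le (show 2 * i ≤ k by rw [Finset.mem_range] at hi; omega)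
  rw [Nat.add_sub_cancel_left, pow_succ, pow_add, pow_mul, neg_one_sq, one_pow, neg_pow (2 * _)]
  ring

theorem lCoeff_annihilates_general (m : ℕ) (θ : ℝ) (h : ℕ) (hh : h + 1 ≤ m) :
    (∑ k ∈ Finset.range (2 * m + 1),
        (if k = 2 * m then (-1 : ℂ) else (lCoeff m θ k : ℂ)) * (k.choose h : ℂ) *
          Complex.exp (I * (((k : ℝ) - h) * θ))) = 0 := by
  set q : ℂ[X] := X ^ 2 - C (2 * cos (θ : ℂ)) * X + 1
  set a := cexp (θ * I)
  have hq_natDegree : q.natDegree ≤ 2 := by unfold q; compute_degree!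
  have hdvd : (X - C a) ^ m ∣ q ^ m := by
    rw [show q = _ from X_sq_sub_two_cos_mul_X_add_one θ, mul_pow]; exact dvd_mul_right _ _
  have hcoeff (k : ℕ) :
      (if k = 2 * m then (-1 : ℂ) else (lCoeff m θ k : ℂ)) = -(q ^ m).coeff k := by
    split_ifs with hk
    · rw [hk, mul_comm, coeff_pow_of_natDegree_le hq_natDegree]
      unfold q; simp [coeff_one]
    · exact lCoeff_eq_neg_coeff m θ k
  have hexp (k : ℕ) : cexp (I * (((k : ℝ) - h) * θ)) = cexp (-(h * θ * I)) * a ^ k := by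
    rw [← exp_nat_mul, ← exp_add]; congr 1; push_cast; ring
  calc _ = -cexp (-(h * θ * I)) *
        ∑ k ∈ Finset.range (2 * m + 1), (q ^ m).coeff k * k.choose h * a ^ k := by
        rw [Finset.mul_sum]
        refine Finset.sum_congr rfl fun k _ => ?_
        rw [hcoeff, hexp]
        ring
    _ = 0 := by
        have hdeg : (q ^ m).natDegree < 2 * m + 1 := by
          grw [natDegree_pow_le_of_le m hq_natDegree]; omega
        rw [sum_coeff_mul_choose_mul_pow _ _ _ hdeg, eval_hasseDeriv_eq_zero_of_dvd hdvd (by omega),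
          mul_zero, mul_zero]

theorem lCoeff_annihilates (m : ℕ) (hm : 1 ≤ m) (θ : ℝ) (h : ℕ) (hh : h + 1 ≤ m) :
    (∑ k ∈ Finset.range (2 * m + 1),
        (if k = 2 * m then (-1 : ℂ) else (lCoeff m θ k : ℂ)) * (k.choose h : ℂ) *
          Complex.exp (I * (((k : ℝ) - h) * θ))) = 0 :=
  lCoeff_annihilates_general m θ h hh
end

section
/- Fix an integer m ≥ 1 and define, for 0 ≤ k ≤ 2m−1, l_k(θ) = (−1)^{k−1} · ∑_{h=0}^{⌊k/2⌋} C(m, k−2h) · C(m−(k−2h), h) · (2 cos θ)^{k−2h}. Then ∑_{k=0}^{2m−1} |l_k(θ)| = (2(1 + |cos θ|))^m − 1 for every real θ. -/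
open Finset

/-- The coefficient of `t ^ k` in `(1 + x t + t ^ 2) ^ m`. -/
def trinomialCoeff {R : Type*} [CommSemiring R] (m : ℕ) (x : R) (k : ℕ) : R :=
  ∑ h ∈ range (k / 2 + 1), (m.choose (k - 2 * h) * (m - (k - 2 * h)).choose h : R) *
    x ^ (k - 2 * h)

section CommSemiring

variable {R : Type*} [CommSemiring R] (m : ℕ) (x : R)

theorem sum_range_trinomialCoeff :
    ∑ k ∈ range (2 * m + 1), trinomialCoeff m x k = (x + 2) ^ m := by
  set G : ℕ × ℕ → R := fun p => (m.choose p.1 * (m - p.1).choose p.2 : R) * x ^ p.1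
  have G_support : ∀ j h, G (j, h) ≠ 0 → j ≤ m ∧ h ≤ m - j := by
    intro j h hG
    by_contra! hlt
    refine hG ?_
    by_cases hj : j ≤ m
    · simp [G, Nat.choose_eq_zero_of_lt (hlt hj)]
    · simp [G, Nat.choose_eq_zero_of_lt (not_le.mp hj)]
  calc ∑ k ∈ range (2 * m + 1), trinomialCoeff m x k
      = ∑ p ∈ (range (2 * m + 1)).sigma (fun k => range (k / 2 + 1)), G (p.1 - 2 * p.2, p.2) :=
        by rw [sum_sigma]; rfl
    _ = ∑ p ∈ (range (m + 1)).sigma (fun j => range (m - j + 1)), G (p.1, p.2) := by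
        refine sum_bij_ne_zero (fun p _ _ => ⟨p.1 - 2 * p.2, p.2⟩) ?_ ?_ ?_ (fun _ _ _ => rfl)
        · rintro ⟨k, h⟩ - hG
          have := G_support _ _ hG
          simp only [mem_sigma, mem_range] at this ⊢
          omega
        · rintro ⟨k, h⟩ hkh - ⟨k', h'⟩ hkh' - heq
          simp only [mem_sigma, mem_range, Sigma.mk.injEq, heq_eq_eq] at hkh hkh' heq ⊢
          omega
        · rintro ⟨j, h⟩ hjh hG
          simp only [mem_sigma, mem_range] at hjh
          exact ⟨⟨j + 2 * h, h⟩, by simp only [mem_sigma, mem_range]; omega,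
            by simpa using hG, by simp⟩
    _ = ∑ j ∈ range (m + 1), x ^ j * 2 ^ (m - j) * m.choose j := by
        rw [sum_sigma]
        refine sum_congr rfl fun j _ => ?_
        simp only [G, ← sum_mul, ← mul_sum, ← Nat.cast_sum, Nat.sum_range_choose]
        push_cast
        ring
    _ = (x + 2) ^ m := (add_pow x 2 m).symm

theorem trinomialCoeff_two_mul_self : trinomialCoeff m x (2 * m) = 1 := by
  rw [trinomialCoeff, Nat.mul_div_cancel_left m two_pos,
    sum_eq_single_of_mem m (self_mem_range_succ m)]
  · simp
  · intro h hh hne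
    rw [mem_range] at hh
    by_cases hle : 2 * m - 2 * h ≤ m
    · rw [Nat.choose_eq_zero_of_lt (n := m - (2 * m - 2 * h)) (by omega)]
      simp
    · rw [Nat.choose_eq_zero_of_lt (by omega : m < 2 * m - 2 * h)]
      simp

end CommSemiring

theorem trinomialCoeff_neg {R : Type*} [CommRing R] (m : ℕ) (x : R) (k : ℕ) :
    trinomialCoeff m (-x) k = (-1) ^ k * trinomialCoeff m x k := by
  rw [trinomialCoeff, trinomialCoeff, mul_sum]
  refine sum_congr rfl fun h hh => ?_
  have hk : (-1 : R) ^ k = (-1) ^ (k - 2 * h) := by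
    rw [mem_range] at hh
    rw [← Nat.sub_add_cancel (by omega : 2 * h ≤ k), pow_add, pow_mul, neg_one_sq, one_pow,
      mul_one, Nat.sub_add_cancel (by omega : 2 * h ≤ k)]
  rw [hk, neg_pow]
  ring

section Ordered

variable {R : Type*} [CommRing R] [LinearOrder R] [IsStrictOrderedRing R]

theorem trinomialCoeff_nonneg (m : ℕ) {x : R} (hx : 0 ≤ x) (k : ℕ) :
    0 ≤ trinomialCoeff m x k :=
  sum_nonneg fun _ _ => by positivity

theorem abs_trinomialCoeff (m : ℕ) (x : R) (k : ℕ) :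
    |trinomialCoeff m x k| = trinomialCoeff m |x| k := by
  rcases abs_choice x with hx | hx
  · rw [hx, abs_of_nonneg (trinomialCoeff_nonneg m (hx ▸ abs_nonneg x) k)]
  · calc |trinomialCoeff m x k| = |trinomialCoeff m (-|x|) k| := by rw [hx, neg_neg]
      _ = trinomialCoeff m |x| k := by
        rw [trinomialCoeff_neg, abs_mul, abs_neg_one_pow, one_mul,
          abs_of_nonneg (trinomialCoeff_nonneg m (abs_nonneg x) k)]

end Ordered

theorem abs_lCoeff (m : ℕ) (θ : ℝ) (k : ℕ) :
    |lCoeff m θ k| = trinomialCoeff m |2 * Real.cos θ| k := by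
  rw [lCoeff, ← trinomialCoeff, abs_mul, abs_neg_one_pow, one_mul, abs_trinomialCoeff]

theorem lCoeff_abs_sum_general (m : ℕ) (θ : ℝ) :
    (∑ k ∈ Finset.range (2 * m), |lCoeff m θ k|) =
      (2 * (1 + |Real.cos θ|)) ^ m - 1 := by
  have h := sum_range_trinomialCoeff m |2 * Real.cos θ|
  rw [sum_range_succ, trinomialCoeff_two_mul_self] at h
  simp only [abs_lCoeff]
  rw [eq_sub_of_add_eq h, abs_mul, abs_two]
  ring

theorem lCoeff_abs_sum (m : ℕ) (hm : 1 ≤ m) (θ : ℝ) :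
    (∑ k ∈ Finset.range (2 * m), |lCoeff m θ k|) =
      (2 * (1 + |Real.cos θ|)) ^ m - 1 :=
  lCoeff_abs_sum_general m θ
end
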